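/- For any matrix B ∈ ℝ^{K×K} symmetric with nonnegative entries, any positive vector a ∈ ℝ^K with entries a_k > 0, and any vector c ∈ ℝ^K, one has Σ_{k,l} B_{kl} (a_l / a_k) c_k² ≥ Σ_{k,l} c_k c_l B_{kl}. -/
import Mathlib


theorem nmf_key_inequality {K : ℕ} (B : Matrix (Fin K) (Fin K) ℝ)
    (hBsymm : ∀ k l, B k l = B l k) (hBnonneg : ∀ k l, 0 ≤ B k l)
    (a : Fin K → ℝ) (ha : ∀ k, 0 < a k) (c : Fin K → ℝ) :
    ∑ k, ∑ l, B k l * (a l / a k) * (c k) ^ 2 ≥ ∑ k, ∑ l, c k * c l * B k l := by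
  have key : ∀ k l, B k l * (a k / a l) * (c l) ^ 2 + B k l * (a l / a k) * (c k) ^ 2
      ≥ 2 * (c k * c l * B k l) := by
    intro k l
    have hak := ha k
    have hal := ha l
    have h1 : (a l / a k) * (c k) ^ 2 + (a k / a l) * (c l) ^ 2 - 2 * (c k * c l)
        = (a l * c k - a k * c l) ^ 2 / (a k * a l) := by
      field_simp
      ring
    have h2 : 0 ≤ (a l / a k) * (c k) ^ 2 + (a k / a l) * (c l) ^ 2 - 2 * (c k * c l) := by
      rw [h1]; positivity
    nlinarith [mul_nonneg (hBnonneg k l) h2]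
  have swap : ∑ k, ∑ l, B k l * (a k / a l) * (c l) ^ 2
      = ∑ k, ∑ l, B k l * (a l / a k) * (c k) ^ 2 := by
    rw [Finset.sum_comm]
    exact Finset.sum_congr rfl fun k _ => Finset.sum_congr rfl fun l _ => by rw [hBsymm]
  have sumkey : ∑ k, ∑ l, (B k l * (a k / a l) * (c l) ^ 2 + B k l * (a l / a k) * (c k) ^ 2)
      ≥ ∑ k, ∑ l, 2 * (c k * c l * B k l) :=
    Finset.sum_le_sum fun k _ => Finset.sum_le_sum fun l _ => key k l
  have expand : ∑ k, ∑ l, (B k l * (a k / a l) * (c l) ^ 2 + B k l * (a l / a k) * (c k) ^ 2)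
      = ∑ k, ∑ l, B k l * (a k / a l) * (c l) ^ 2 + ∑ k, ∑ l, B k l * (a l / a k) * (c k) ^ 2 := by
    rw [← Finset.sum_add_distrib]
    exact Finset.sum_congr rfl fun k _ => Finset.sum_add_distrib
  have two : ∑ k, ∑ l, 2 * (c k * c l * B k l) = 2 * ∑ k, ∑ l, c k * c l * B k l := by
    rw [Finset.mul_sum]
    exact Finset.sum_congr rfl fun k _ => (Finset.mul_sum _ _ _).symm
  rw [expand, swap, two] at sumkey
  linarith
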